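/- Let G be a finite simple graph. Then the treewidth of G² satisfies tw(G²) ≤ Δ(G)·(tw(G)+1) − 1, where G² is the graph on V(G) in which two distinct vertices are adjacent if their distance in G is at most 2. -/

import Mathlib

/-- `B : Fin n → Finset V` together with a tree `T` on `Fin n` is a tree decomposition
of `G` of width at most `k` (i.e. all bags have size at most `k + 1`). -/
def HasTreeDecompositionOfWidth {V : Type} (G : SimpleGraph V) (k : ℕ) : Prop :=
  ∃ (n : ℕ) (T : SimpleGraph (Fin n)) (B : Fin n → Finset V),
    T.Connected ∧ T.IsAcyclic ∧
    (∀ v : V, ∃ i, v ∈ B i) ∧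
    (∀ u v : V, G.Adj u v → ∃ i, u ∈ B i ∧ v ∈ B i) ∧
    (∀ v : V, (T.induce {i | v ∈ B i}).Connected) ∧
    (∀ i, (B i).card ≤ k + 1)

/-- The treewidth of a finite graph. -/
noncomputable def treewidth {V : Type} (G : SimpleGraph V) : ℕ :=
  sInf {k | HasTreeDecompositionOfWidth G k}

/-- The square of a graph: distinct vertices are adjacent iff they are at distance at most 2. -/
def graphSquare {V : Type} (G : SimpleGraph V) : SimpleGraph V :=
  SimpleGraph.fromRel (fun u v => G.Adj u v ∨ ∃ w, G.Adj u w ∧ G.Adj w v)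

/-!
Start from a tree decomposition `(T, X)` of `G`. For every vertex `w` fix one neighbour `c w` and
a hub bag containing `w` and `c w`; for every neighbour `v` of `w`, add `v` to all bags on the tree
path from the hub of `w` to some bag containing both `v` and `w`. That path stays in the subtree of
`w`, since subtrees of a tree are convex, so a bag only receives neighbours of its own vertices;
for the same reason the route of `c w` stays in the subtree of `c w`, so `c w` is never new. Hence
each of the at most `tw + 1` vertices of a bag brings in at most `Δ - 1` new vertices. The hub of
`w` sees all neighbours of `w`, which covers the pairs at distance two, and the new subtree of `v`
is its old subtree with paths attached to it.
-/

open SimpleGraph Finset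

variable {V : Type} {ι : Type*}

structure IsTreeDecomposition (G : SimpleGraph V) (T : SimpleGraph ι) (X : ι → Finset V) :
    Prop where
  connected : T.Connected
  isAcyclic : T.IsAcyclic
  exists_mem : ∀ v, ∃ i, v ∈ X i
  exists_mem_of_adj : ∀ u v, G.Adj u v → ∃ i, u ∈ X i ∧ v ∈ X i
  connected_trace : ∀ v, (T.induce {i | v ∈ X i}).Connected

lemma hasTreeDecompositionOfWidth_iff {G : SimpleGraph V} {k : ℕ} :
    HasTreeDecompositionOfWidth G k ↔
      ∃ (n : ℕ) (T : SimpleGraph (Fin n)) (X : Fin n → Finset V),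
        IsTreeDecomposition G T X ∧ ∀ i, (X i).card ≤ k + 1 :=
  ⟨fun ⟨n, T, X, h₁, h₂, h₃, h₄, h₅, h₆⟩ => ⟨n, T, X, ⟨h₁, h₂, h₃, h₄, h₅⟩, h₆⟩,
    fun ⟨n, T, X, ⟨h₁, h₂, h₃, h₄, h₅⟩, h₆⟩ => ⟨n, T, X, h₁, h₂, h₃, h₄, h₅, h₆⟩⟩

lemma graphSquare_adj {G : SimpleGraph V} {u v : V} :
    (graphSquare G).Adj u v ↔ u ≠ v ∧ (G.Adj u v ∨ ∃ w, G.Adj u w ∧ G.Adj w v) := by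
  simp only [graphSquare, fromRel_adj, and_congr_right_iff]
  intro _
  constructor
  · rintro (h | h | ⟨w, hvw, hwu⟩)
    exacts [h, Or.inl h.symm, Or.inr ⟨w, hwu.symm, hvw.symm⟩]
  · exact Or.inl

lemma graphSquare_bot : graphSquare (⊥ : SimpleGraph V) = ⊥ :=
  eq_bot_iff_forall_not_adj.mpr fun _ _ h => by simp [graphSquare_adj] at h

namespace SimpleGraph

variable {T : SimpleGraph ι}

lemma connected_induce_of_subsingleton {S : Set ι} (hne : S.Nonempty) (hS : S.Subsingleton) :
    (T.induce S).Connected :=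
  have := hne.to_subtype
  have := hS.coe_sort
  ⟨Preconnected.of_subsingleton⟩

lemma IsAcyclic.support_subset_of_connected_induce (hT : T.IsAcyclic) {S : Set ι}
    (hS : (T.induce S).Connected) {a b : ι} (ha : a ∈ S) (hb : b ∈ S) (p : T.Path a b) :
    {x | x ∈ p.1.support} ⊆ S := by
  classical
  obtain ⟨q⟩ := hS.preconnected ⟨a, ha⟩ ⟨b, hb⟩
  rw [(hT.subsingleton_path a b).elim p (q.map (Embedding.induce S).toHom).toPath]
  intro x hx
  have hx' := Walk.support_map _ _ ▸ Walk.support_bypass_subset_support _ hx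
  obtain ⟨y, -, rfl⟩ := List.mem_map.mp hx'
  exact y.2

lemma induce_union_iUnion_connected {κ : Type*} {S : Set ι} {A : κ → Set ι}
    (hS : (T.induce S).Connected) (hA : ∀ k, (T.induce (S ∪ A k)).Connected) :
    (T.induce (S ∪ ⋃ k, A k)).Connected := by
  obtain ⟨u, hu⟩ := hS.nonempty
  refine induce_connected_of_patches u (Or.inl hu) fun {x} hx => ?_
  rcases hx with hx | hx
  · exact ⟨S, Set.subset_union_left, hu, hx, hS.preconnected _ _⟩
  · obtain ⟨k, hk⟩ := Set.mem_iUnion.mp hx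
    exact ⟨S ∪ A k, Set.union_subset_union_right _ (Set.subset_iUnion _ k), Or.inl hu, Or.inr hk,
      (hA k).preconnected _ _⟩

end SimpleGraph

namespace IsTreeDecomposition

variable {G : SimpleGraph V} {T : SimpleGraph ι} {X : ι → Finset V}

lemma univ [Fintype V] :
    IsTreeDecomposition G (⊥ : SimpleGraph (Fin 1)) fun _ => Finset.univ where
  connected := connected_bot_iff.mpr ⟨inferInstance, inferInstance⟩
  isAcyclic := isAcyclic_bot
  exists_mem v := ⟨0, mem_univ v⟩
  exists_mem_of_adj u v _ := ⟨0, mem_univ u, mem_univ v⟩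
  connected_trace v :=
    connected_induce_of_subsingleton ⟨0, mem_univ v⟩ Set.subsingleton_of_subsingleton

/-- The extra node `Fin.last` keeps the tree nonempty when `V` is empty. -/
lemma bot [Fintype V] :
    IsTreeDecomposition (⊥ : SimpleGraph V) (starGraph (0 : Fin (Fintype.card V + 1)))
      fun i => Finset.univ.filter fun v => (Fintype.equivFin V v).castSucc = i where
  connected := (isTree_starGraph 0).connected
  isAcyclic := (isTree_starGraph 0).isAcyclic
  exists_mem v := ⟨_, mem_filter.mpr ⟨mem_univ v, rfl⟩⟩
  exists_mem_of_adj _ _ h := h.elim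
  connected_trace v := by
    refine connected_induce_of_subsingleton ⟨_, mem_filter.mpr ⟨mem_univ v, rfl⟩⟩ ?_
    intro i hi j hj
    exact (mem_filter.mp hi).2.symm.trans (mem_filter.mp hj).2

lemma support_subset_trace (hX : IsTreeDecomposition G T X) {a b : ι} (p : T.Path a b) {v : V}
    (ha : v ∈ X a) (hb : v ∈ X b) : {x | x ∈ p.1.support} ⊆ {i | v ∈ X i} :=
  hX.isAcyclic.support_subset_of_connected_induce (hX.connected_trace v) ha hb p

end IsTreeDecomposition

lemma hasTreeDecompositionOfWidth_treewidth [Fintype V] (G : SimpleGraph V) :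
    HasTreeDecompositionOfWidth G (treewidth G) :=
  Nat.sInf_mem (s := {k | HasTreeDecompositionOfWidth G k}) ⟨Fintype.card V,
    hasTreeDecompositionOfWidth_iff.mpr
      ⟨1, ⊥, _, .univ, fun _ => (card_univ (α := V)).le.trans (Nat.le_succ _)⟩⟩

lemma treewidth_bot [Fintype V] : treewidth (⊥ : SimpleGraph V) = 0 :=
  Nat.sInf_eq_zero.mpr <| Or.inl <| hasTreeDecompositionOfWidth_iff.mpr ⟨_, _, _, .bot,
    fun _ => card_le_one.mpr fun _ ha _ hb =>
      (Fintype.equivFin V).injective <| Fin.castSucc_injective _ <|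
        (mem_filter.mp ha).2.trans (mem_filter.mp hb).2.symm⟩

/-- `R w v` is the set of bags to which the neighbour `v` of `w` is added. -/
structure IsNeighborRouting (G : SimpleGraph V) (T : SimpleGraph ι) (X : ι → Finset V)
    (R : V → V → Set ι) : Prop where
  exists_hub : ∀ w, ∃ t, ∀ v, G.Adj w v → t ∈ R w v
  subset_trace : ∀ w v, G.Adj w v → R w v ⊆ {t | w ∈ X t}
  connected_trace_union : ∀ w v, G.Adj w v → (T.induce ({t | v ∈ X t} ∪ R w v)).Connected
  exists_subset_trace : ∀ w v, G.Adj w v → ∃ u, G.Adj w u ∧ R w u ⊆ {t | u ∈ X t}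

variable {G : SimpleGraph V} {T : SimpleGraph ι} {X : ι → Finset V} {R : V → V → Set ι}

lemma IsTreeDecomposition.exists_isNeighborRouting (hX : IsTreeDecomposition G T X) :
    ∃ R, IsNeighborRouting G T X R := by
  classical
  have := hX.connected.nonempty
  have hub : ∀ w, ∃ c t, ∀ v, G.Adj w v → G.Adj w c ∧ c ∈ X t ∧ w ∈ X t := by
    intro w
    by_cases hw : ∃ v, G.Adj w v
    · obtain ⟨c, hc⟩ := hw
      obtain ⟨t, hwt, hct⟩ := hX.exists_mem_of_adj w c hc
      exact ⟨c, t, fun _ _ => ⟨hc, hct, hwt⟩⟩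
    · exact ⟨w, Classical.arbitrary ι, fun v hv => absurd ⟨v, hv⟩ hw⟩
  choose c hub hhub using hub
  have hbag : ∀ w v, ∃ t, G.Adj w v → w ∈ X t ∧ v ∈ X t := fun w v => by
    by_cases h : G.Adj w v
    · exact (hX.exists_mem_of_adj w v h).imp fun _ ht _ => ht
    · exact ⟨Classical.arbitrary ι, fun h' => absurd h' h⟩
  choose p hp using hbag
  let path w v : T.Path (hub w) (p w v) := (hX.connected.preconnected _ _).some.toPath
  refine ⟨fun w v => {t | t ∈ (path w v).1.support}, ⟨?_, ?_, ?_, ?_⟩⟩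
  · exact fun w => ⟨hub w, fun v _ => Walk.start_mem_support _⟩
  · exact fun w v h => hX.support_subset_trace _ (hhub w v h).2.2 (hp w v h).1
  · intro w v h
    exact induce_union_connected (hX.connected_trace v).preconnected
      (Walk.connected_induce_support _).preconnected ⟨p w v, (hp w v h).2, Walk.end_mem_support _⟩
  · intro w v h
    obtain ⟨hc, hct, -⟩ := hhub w v h
    exact ⟨c w, hc, hX.support_subset_trace _ hct (hp w (c w) hc).2⟩

variable [Fintype V]

open Classical in
noncomputable def squareBag (G : SimpleGraph V) (X : ι → Finset V) (R : V → V → Set ι) (t : ι) :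
    Finset V :=
  Finset.univ.filter fun v => v ∈ X t ∨ ∃ w, G.Adj w v ∧ t ∈ R w v

lemma mem_squareBag {t : ι} {v : V} :
    v ∈ squareBag G X R t ↔ v ∈ X t ∨ ∃ w, G.Adj w v ∧ t ∈ R w v := by
  simp [squareBag]

lemma IsTreeDecomposition.graphSquare (hX : IsTreeDecomposition G T X)
    (hR : IsNeighborRouting G T X R) :
    IsTreeDecomposition (graphSquare G) T (squareBag G X R) where
  connected := hX.connected
  isAcyclic := hX.isAcyclic
  exists_mem v := (hX.exists_mem v).imp fun _ h => mem_squareBag.mpr (Or.inl h)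
  exists_mem_of_adj u v huv := by
    rcases (graphSquare_adj.mp huv).2 with h | ⟨w, huw, hwv⟩
    · exact (hX.exists_mem_of_adj u v h).imp fun _ ⟨hu, hv⟩ =>
        ⟨mem_squareBag.mpr (Or.inl hu), mem_squareBag.mpr (Or.inl hv)⟩
    · obtain ⟨t, ht⟩ := hR.exists_hub w
      exact ⟨t, mem_squareBag.mpr (Or.inr ⟨w, huw.symm, ht u huw.symm⟩),
        mem_squareBag.mpr (Or.inr ⟨w, hwv, ht v hwv⟩)⟩
  connected_trace v := by
    have htrace : {t | v ∈ squareBag G X R t} = {t | v ∈ X t} ∪ ⋃ w : {w // G.Adj w v}, R w v := by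
      ext t
      simp [mem_squareBag]
    rw [htrace]
    exact induce_union_iUnion_connected (hX.connected_trace v)
      fun w => hR.connected_trace_union w v w.2

variable [DecidableRel G.Adj]

open Classical in
lemma IsNeighborRouting.card_insert_filter_le (hR : IsNeighborRouting G T X R)
    (hD : 0 < G.maxDegree) (t : ι) (w : V) :
    (insert w ((G.neighborFinset w).filter fun v => v ∉ X t ∧ t ∈ R w v)).card ≤ G.maxDegree := by
  refine (card_insert_le _ _).trans ?_
  by_cases hw : ∃ v, G.Adj w v
  · obtain ⟨v, hv⟩ := hw
    obtain ⟨u, hu, huR⟩ := hR.exists_subset_trace w v hv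
    have hsub : (G.neighborFinset w).filter (fun v => v ∉ X t ∧ t ∈ R w v) ⊆
        (G.neighborFinset w).erase u := fun x hx => by
      obtain ⟨hx, hxX, hxR⟩ := mem_filter.mp hx
      exact mem_erase.mpr ⟨fun hxu => hxX (hxu ▸ huR (hxu ▸ hxR)), hx⟩
    have hu' : u ∈ G.neighborFinset w := (G.mem_neighborFinset w u).mpr hu
    have hcard := card_le_card hsub
    rw [card_erase_of_mem hu', card_neighborFinset_eq_degree] at hcard
    have hdeg := G.degree_le_maxDegree w
    have hpos := G.degree_pos_iff_exists_adj w |>.mpr ⟨u, hu⟩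
    omega
  · have : G.neighborFinset w = ∅ := by
      ext v; simpa using fun h => hw ⟨v, h⟩
    simpa [this, Nat.one_le_iff_ne_zero] using hD.ne'

lemma card_squareBag_le (hR : IsNeighborRouting G T X R) (hD : 0 < G.maxDegree) (t : ι) :
    (squareBag G X R t).card ≤ G.maxDegree * (X t).card := by
  classical
  have hsub : squareBag G X R t ⊆ (X t).biUnion fun w =>
      insert w ((G.neighborFinset w).filter fun v => v ∉ X t ∧ t ∈ R w v) := by
    intro v hv
    simp only [mem_biUnion, mem_insert, mem_filter, mem_neighborFinset]
    rcases mem_squareBag.mp hv with hv | ⟨w, hwv, ht⟩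
    · exact ⟨v, hv, Or.inl rfl⟩
    · by_cases hvX : v ∈ X t
      · exact ⟨v, hvX, Or.inl rfl⟩
      · exact ⟨w, hR.subset_trace w v hwv ht, Or.inr ⟨hwv, hvX, ht⟩⟩
  calc (squareBag G X R t).card
      ≤ ∑ w ∈ X t, (insert w ((G.neighborFinset w).filter fun v => v ∉ X t ∧ t ∈ R w v)).card :=
        (card_le_card hsub).trans card_biUnion_le
    _ ≤ (X t).card • G.maxDegree := sum_le_card_nsmul _ _ _ fun w _ => by
        convert hR.card_insert_filter_le hD t w
    _ = G.maxDegree * (X t).card := by rw [smul_eq_mul, mul_comm]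

lemma HasTreeDecompositionOfWidth.graphSquare {k : ℕ} (hD : 0 < G.maxDegree)
    (h : HasTreeDecompositionOfWidth G k) :
    HasTreeDecompositionOfWidth (graphSquare G) (G.maxDegree * (k + 1) - 1) := by
  obtain ⟨n, T, X, hX, hcard⟩ := hasTreeDecompositionOfWidth_iff.mp h
  obtain ⟨R, hR⟩ := hX.exists_isNeighborRouting
  refine hasTreeDecompositionOfWidth_iff.mpr ⟨n, T, _, hX.graphSquare hR, fun t => ?_⟩
  calc (squareBag G X R t).card ≤ G.maxDegree * (X t).card := card_squareBag_le hR hD t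
    _ ≤ G.maxDegree * (k + 1) := Nat.mul_le_mul_left _ (hcard t)
    _ = G.maxDegree * (k + 1) - 1 + 1 := (Nat.sub_add_cancel (Nat.mul_pos hD k.succ_pos)).symm

theorem treewidth_square_le
    {V : Type} [Fintype V] (G : SimpleGraph V) [DecidableRel G.Adj] :
    treewidth (graphSquare G) ≤ G.maxDegree * (treewidth G + 1) - 1 := by
  rcases Nat.eq_zero_or_pos G.maxDegree with hD | hD
  · have : treewidth (graphSquare G) = 0 := by
      rw [maxDegree_eq_zero_iff.mp hD, graphSquare_bot, treewidth_bot]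
    exact this ▸ Nat.zero_le _
  · exact Nat.sInf_le ((hasTreeDecompositionOfWidth_treewidth G).graphSquare hD)
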